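/- arXiv:2502.06349 — 2 statements merged into one kernel-verified Lean document; each statement's English description precedes it below -/
import Mathlib

section
/- Let l be a convex loss function (convex in its first argument), let p_1, ..., p_K be probability densities on X with mixture p = Σ_k π_k p_k where π_k ≥ 0 and Σ_k π_k = 1, and let h_1, ..., h_K be hypotheses. Define weight functions w_k*(x) = π_k p_k(x)/Σ_i π_i p_i(x) (on points where the denominator is positive). Then the expected loss of the ensemble satisfies L_p(Σ_k w_k*·h_k) ≤ Σ_k π_k · L_{p_k}(h_k), where L_q(h) = E_{x~q}[l(h(x), y(x))] for a fixed labeling function y. -/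
open MeasureTheory Finset

/-! If all the weights vanish at `x`, both sides are `0`; otherwise Jensen's inequality for the
normalized weights `π k p_k(x) / ∑ i, π i p_i(x)`, multiplied by the mixture density, bounds the
integrand pointwise by `∑ k, π k ℓ(h_k(x), y(x)) p_k(x)`. Integrating gives the claim. -/

theorem convexOn_univ_of_fin_jensen {f : ℝ → ℝ}
    (hf : ∀ (n : ℕ) (lam u : Fin n → ℝ), (∀ i, 0 ≤ lam i) → (∑ i, lam i) = 1 →
      f (∑ i, lam i * u i) ≤ ∑ i, lam i * f (u i)) :
    ConvexOn ℝ Set.univ f := by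
  refine ⟨convex_univ, fun x _ y _ a b ha hb hab => ?_⟩
  have := hf 2 ![a, b] ![x, y] (by simp [Fin.forall_fin_two, ha, hb]) (by simpa using hab)
  simpa using this

theorem ConvexOn.map_sum_div_mul_sum_le {ι : Type*} {D : Set ℝ} {f : ℝ → ℝ}
    (hf : ConvexOn ℝ D f) (s : Finset ι) {a u : ι → ℝ} (ha : ∀ i ∈ s, 0 ≤ a i)
    (hu : ∀ i ∈ s, u i ∈ D) :
    f (∑ i ∈ s, a i / (∑ j ∈ s, a j) * u i) * ∑ i ∈ s, a i ≤ ∑ i ∈ s, a i * f (u i) := by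
  rcases (sum_nonneg ha).eq_or_lt with hzero | hpos
  · have hvanish : ∀ i ∈ s, a i = 0 := (sum_eq_zero_iff_of_nonneg ha).mp hzero.symm
    rw [← hzero, mul_zero, sum_eq_zero fun i hi => by rw [hvanish i hi, zero_mul]]
  · have hjensen := hf.map_sum_le (t := s) (w := fun i => a i / ∑ j ∈ s, a j) (p := u)
      (fun i hi => div_nonneg (ha i hi) hpos.le)
      (by rw [← sum_div, div_self hpos.ne']) hu
    simp only [smul_eq_mul] at hjensen
    calc f (∑ i ∈ s, a i / (∑ j ∈ s, a j) * u i) * ∑ i ∈ s, a i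
        ≤ (∑ i ∈ s, a i / (∑ j ∈ s, a j) * f (u i)) * ∑ i ∈ s, a i :=
          mul_le_mul_of_nonneg_right hjensen hpos.le
      _ = ∑ i ∈ s, a i * f (u i) := by
          rw [sum_mul]
          refine sum_congr rfl fun i _ => ?_
          field_simp

theorem ensemble_loss_le_weighted_client_losses_general
    {X : Type*} [MeasurableSpace X] (μ : Measure X) (K : ℕ)
    (p : Fin K → X → ℝ) (π : Fin K → ℝ) (h : Fin K → X → ℝ) (y : X → ℝ)
    (l : ℝ → ℝ → ℝ)
    (hp : ∀ k x, 0 ≤ p k x) (hπ : ∀ k, 0 ≤ π k)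
    (hconv : ∀ (v : ℝ) (n : ℕ) (lam u : Fin n → ℝ), (∀ i, 0 ≤ lam i) → (∑ i, lam i) = 1 →
      l (∑ i, lam i * u i) v ≤ ∑ i, lam i * l (u i) v)
    (hint1 : Integrable (fun x =>
      l (∑ k, (π k * p k x / ∑ i, π i * p i x) * h k x) (y x) * (∑ k, π k * p k x)) μ)
    (hint2 : ∀ k, Integrable (fun x => l (h k x) (y x) * p k x) μ) :
    (∫ x, l (∑ k, (π k * p k x / ∑ i, π i * p i x) * h k x) (y x) * (∑ k, π k * p k x) ∂μ)
      ≤ ∑ k, π k * ∫ x, l (h k x) (y x) * p k x ∂μ := by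
  have hpointwise : ∀ x,
      l (∑ k, (π k * p k x / ∑ i, π i * p i x) * h k x) (y x) * (∑ k, π k * p k x)
        ≤ ∑ k, π k * (l (h k x) (y x) * p k x) := fun x => by
    have := (convexOn_univ_of_fin_jensen (f := (l · (y x))) (hconv (y x))).map_sum_div_mul_sum_le univ
      (a := fun k => π k * p k x) (u := fun k => h k x)
      (fun k _ => mul_nonneg (hπ k) (hp k x)) fun _ _ => Set.mem_univ _
    exact this.trans_eq (sum_congr rfl fun k _ => by ring)
  calc _ ≤ ∫ x, ∑ k, π k * (l (h k x) (y x) * p k x) ∂μ :=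
        integral_mono hint1 (integrable_finsetSum _ fun k _ => (hint2 k).const_mul (π k))
          hpointwise
    _ = ∑ k, π k * ∫ x, l (h k x) (y x) * p k x ∂μ := by
        rw [integral_finsetSum _ fun k _ => (hint2 k).const_mul (π k)]
        exact sum_congr rfl fun k _ => integral_const_mul _ _

/-- Optimal-weight ensemble loss bound: with weights `w_k*(x) = π k * p k x / ∑ i, π i * p i x`,
the expected loss of the ensemble over the mixture `p = ∑ k, π k * p k` is at most
`∑ k, π k * L_{p_k}(h_k)`, for a loss `l` that is convex in its first argument. -/
theorem ensemble_loss_le_weighted_client_losses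
    {X : Type*} [MeasurableSpace X] (μ : Measure X) (K : ℕ)
    (p : Fin K → X → ℝ) (π : Fin K → ℝ) (h : Fin K → X → ℝ) (y : X → ℝ)
    (l : ℝ → ℝ → ℝ)
    (hp : ∀ k x, 0 ≤ p k x) (hπ : ∀ k, 0 ≤ π k) (hπ1 : ∑ k, π k = 1)
    (hl : ∀ u v, 0 ≤ l u v)
    (hconv : ∀ (v : ℝ) (n : ℕ) (lam u : Fin n → ℝ), (∀ i, 0 ≤ lam i) → (∑ i, lam i) = 1 →
      l (∑ i, lam i * u i) v ≤ ∑ i, lam i * l (u i) v)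
    (hint1 : Integrable (fun x =>
      l (∑ k, (π k * p k x / ∑ i, π i * p i x) * h k x) (y x) * (∑ k, π k * p k x)) μ)
    (hint2 : ∀ k, Integrable (fun x => l (h k x) (y x) * p k x) μ) :
    (∫ x, l (∑ k, (π k * p k x / ∑ i, π i * p i x) * h k x) (y x) * (∑ k, π k * p k x) ∂μ)
      ≤ ∑ k, π k * ∫ x, l (h k x) (y x) * p k x ∂μ :=
  ensemble_loss_le_weighted_client_losses_general μ K p π h y l hp hπ hconv hint1 hint2
end

section
/- Suppose for each k, D_k(x) = p_k(x)/(p_k(x) + p_g(x)) is the optimal discriminator output for client distribution p_k against generator distribution p_g, and let Φ_k(x) = D_k(x)/(1 - D_k(x)) be the odds. Then for every x in the support of p_g (i.e., p_g(x) > 0), and positive weights n_1, ..., n_K, we have n_k·Φ_k(x)/Σ_i n_i·Φ_i(x) = n_k·p_k(x)/Σ_i n_i·p_i(x), provided Σ_i n_i p_i(x) > 0. -/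
/-! The odds of `p k x / (p k x + pg x)` are `p k x / pg x`, so the odds weights are the density
weights divided by the common factor `pg x`, which cancels in the normalization. -/

open Finset

theorem div_add_div_one_sub_div_add {K : Type*} [Field K] {a b : K} (hab : a + b ≠ 0) :
    a / (a + b) / (1 - a / (a + b)) = a / b := by
  have hcompl : 1 - a / (a + b) = b / (a + b) := by
    field_simp
    ring
  rw [hcompl, div_div_div_cancel_right₀ hab]

theorem div_div_sum_div_const {ι K : Type*} [Field K] (s : Finset ι) (w : ι → K) (j : ι)
    {c : K} (hc : c ≠ 0) :
    w j / c / ∑ i ∈ s, w i / c = w j / ∑ i ∈ s, w i := by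
  rw [← sum_div, div_div_div_cancel_right₀ hc]

theorem odds_weighting_eq_density_weighting_general
    {X : Type*} (K : ℕ) (p : Fin K → X → ℝ) (pg : X → ℝ)
    (D Φ : Fin K → X → ℝ) (n : Fin K → ℝ)
    (hp : ∀ k x, 0 ≤ p k x)
    (hD : ∀ k x, D k x = p k x / (p k x + pg x))
    (hΦ : ∀ k x, Φ k x = D k x / (1 - D k x)) :
    ∀ x, 0 < pg x → 0 < (∑ i, n i * p i x) → ∀ k,
      n k * Φ k x / (∑ i, n i * Φ i x) = n k * p k x / (∑ i, n i * p i x) := by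
  intro x hpgx _ k
  have hΦ_eq : ∀ i, n i * Φ i x = n i * p i x / pg x := fun i => by
    rw [hΦ, hD, div_add_div_one_sub_div_add (by linarith [hp i x]), mul_div_assoc]
  simp only [hΦ_eq]
  exact div_div_sum_div_const _ (fun i => n i * p i x) k hpgx.ne'

/-- With optimal discriminators `D k x = p k x / (p k x + pg x)` and odds
`Φ k x = D k x / (1 - D k x)`, for every `x` in the support of `pg` (and with positive
denominator `∑ i, n i * p i x`) the odds-weighted normalization equals the
density-weighted normalization: `n k * Φ k x / ∑ i, n i * Φ i x = n k * p k x / ∑ i, n i * p i x`. -/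
theorem odds_weighting_eq_density_weighting
    {X : Type*} (K : ℕ) (p : Fin K → X → ℝ) (pg : X → ℝ)
    (D Φ : Fin K → X → ℝ) (n : Fin K → ℝ)
    (hp : ∀ k x, 0 ≤ p k x) (hpg : ∀ x, 0 ≤ pg x) (hn : ∀ k, 0 < n k)
    (hD : ∀ k x, D k x = p k x / (p k x + pg x))
    (hΦ : ∀ k x, Φ k x = D k x / (1 - D k x)) :
    ∀ x, 0 < pg x → 0 < (∑ i, n i * p i x) → ∀ k,
      n k * Φ k x / (∑ i, n i * Φ i x) = n k * p k x / (∑ i, n i * p i x) :=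
  odds_weighting_eq_density_weighting_general K p pg D Φ n hp hD hΦ
end
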